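/- Fix a matrix D̄ ∈ ℝ^{N×n}, an integer τ ≥ 1, and a real α > 0 with ταL ≤ 2. Let Y : ℕ → ℝ^{N×n} satisfy Y(s+1) = Y(s) − α∇F(Y(s)) − αD̄ for all s ≥ 0. Then, with A₁ = (τ²/2)(1 + 2/τ)^{2τ−2}, for every integer s with 0 ≤ s ≤ τ−1: ‖∇F(Y(s)) − ∇F(Y(0))‖² ≤ A₁L⁴α²‖Y(0) − X*‖² + A₁L²α²‖D̄ − D*‖². -/

import Mathlib

open Matrix
set_option linter.unusedVariables false

noncomputable def Jmat (N : ℕ) : Matrix (Fin N) (Fin N) ℝ :=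
  Matrix.of fun _ _ => (N : ℝ)⁻¹

noncomputable def gradF {N n : ℕ}
    (g : Fin N → EuclideanSpace ℝ (Fin n) → EuclideanSpace ℝ (Fin n))
    (X : Matrix (Fin N) (Fin n) ℝ) : Matrix (Fin N) (Fin n) ℝ :=
  Matrix.of fun i => (WithLp.equiv 2 (Fin n → ℝ))
    (g i ((WithLp.equiv 2 (Fin n → ℝ)).symm (X i)))

/-- Squared weighted norm `‖A‖_Q² = tr(AᵀQA)`. -/
noncomputable def nsqQ {N n : ℕ} (Q : Matrix (Fin N) (Fin N) ℝ)
    (A : Matrix (Fin N) (Fin n) ℝ) : ℝ :=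
  Matrix.trace (Aᵀ * Q * A)

/-- Squared Frobenius norm `‖A‖² = tr(AᵀA)`. -/
noncomputable def frobSq {N n : ℕ} (A : Matrix (Fin N) (Fin n) ℝ) : ℝ :=
  Matrix.trace (Aᵀ * A)

/-! Compare the iteration with the reference point `X*`, where `-α∇F(X*) - αD* = 0`: each step
moves `Y` by at most `α (L‖Y k - X*‖ + ‖D̄ - D*‖)`, and this rate grows by a factor at most
`1 + αL ≤ 1 + 2/τ` per step. Summing the geometric series up to `s ≤ τ - 1` gives
`‖Y s - Y 0‖ ≤ α (τ/2) (1 + 2/τ)^(τ-1) (L‖Y 0 - X*‖ + ‖D̄ - D*‖)`; then `L`-smoothness of `∇F`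
and `(a + b)² ≤ 2(a² + b²)`. -/

open scoped Matrix.Norms.Frobenius

section LipschitzDrift

variable {E : Type*} [SeminormedAddCommGroup E] [NormedSpace ℝ E]
  {G : E → E} {L α ρ : ℝ} {xstar dbar dstar : E} {y : ℕ → E}

variable (hG : ∀ x z, ‖G x - G z‖ ≤ L * ‖x - z‖) (hα : 0 ≤ α) (hdstar : dstar = -G xstar)
  (hy : ∀ k, y (k + 1) = y k - α • G (y k) - α • dbar)
include hG hα hdstar hy

lemma norm_iterate_succ_sub_le (k : ℕ) (z : E) :
    ‖y (k + 1) - z‖ ≤ ‖y k - z‖ + α * (L * ‖y k - xstar‖ + ‖dbar - dstar‖) := by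
  have hsplit : y (k + 1) - z
      = (y k - z) - α • (G (y k) - G xstar) - α • (dbar - dstar) := by
    rw [hy k, hdstar]; module
  calc ‖y (k + 1) - z‖
      ≤ ‖y k - z‖ + ‖α • (G (y k) - G xstar)‖ + ‖α • (dbar - dstar)‖ := by
        rw [hsplit]; exact (norm_sub_le _ _).trans (add_le_add_left (norm_sub_le _ _) _)
    _ ≤ ‖y k - z‖ + α * (L * ‖y k - xstar‖) + α * ‖dbar - dstar‖ := by
        rw [norm_smul_of_nonneg hα, norm_smul_of_nonneg hα]
        gcongr
        exact hG _ _
    _ = ‖y k - z‖ + α * (L * ‖y k - xstar‖ + ‖dbar - dstar‖) := by ring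

lemma drift_rate_le_pow (hL : 0 ≤ L) (hρ : 1 + α * L ≤ ρ) (k : ℕ) :
    L * ‖y k - xstar‖ + ‖dbar - dstar‖
      ≤ ρ ^ k * (L * ‖y 0 - xstar‖ + ‖dbar - dstar‖) := by
  induction k with
  | zero => simp
  | succ k ih =>
    have hstep := norm_iterate_succ_sub_le hG hα hdstar hy k xstar
    calc L * ‖y (k + 1) - xstar‖ + ‖dbar - dstar‖
        ≤ (1 + α * L) * (L * ‖y k - xstar‖ + ‖dbar - dstar‖) := by
          linarith [mul_le_mul_of_nonneg_left hstep hL]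
      _ ≤ ρ * (ρ ^ k * (L * ‖y 0 - xstar‖ + ‖dbar - dstar‖)) := by
          have hρ0 : 0 ≤ ρ := by linarith [mul_nonneg hα hL]
          gcongr
      _ = ρ ^ (k + 1) * (L * ‖y 0 - xstar‖ + ‖dbar - dstar‖) := by ring

lemma norm_iterate_sub_initial_le_sum (m : ℕ) :
    ‖y m - y 0‖ ≤ α * ∑ k ∈ Finset.range m, (L * ‖y k - xstar‖ + ‖dbar - dstar‖) := by
  induction m with
  | zero => simp
  | succ m ih =>
    rw [Finset.sum_range_succ, mul_add]
    exact (norm_iterate_succ_sub_le hG hα hdstar hy m (y 0)).trans (by linarith)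

lemma norm_iterate_sub_initial_le_geom (hL : 0 ≤ L) (hρ : 1 + α * L ≤ ρ) (m : ℕ) :
    ‖y m - y 0‖ ≤ α * (∑ k ∈ Finset.range m, ρ ^ k)
      * (L * ‖y 0 - xstar‖ + ‖dbar - dstar‖) := by
  calc ‖y m - y 0‖
      ≤ α * ∑ k ∈ Finset.range m, (L * ‖y k - xstar‖ + ‖dbar - dstar‖) :=
        norm_iterate_sub_initial_le_sum hG hα hdstar hy m
    _ ≤ α * ∑ k ∈ Finset.range m, ρ ^ k * (L * ‖y 0 - xstar‖ + ‖dbar - dstar‖) := by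
        gcongr with k
        exact drift_rate_le_pow hG hα hdstar hy hL hρ k
    _ = α * (∑ k ∈ Finset.range m, ρ ^ k) * (L * ‖y 0 - xstar‖ + ‖dbar - dstar‖) := by
        rw [← Finset.sum_mul, mul_assoc]

end LipschitzDrift

lemma sum_range_pow_one_add_two_div_le {τ s : ℕ} (hτ : 1 ≤ τ) (hs : s ≤ τ - 1) :
    ∑ k ∈ Finset.range s, (1 + 2 / (τ : ℝ)) ^ k ≤ τ / 2 * (1 + 2 / (τ : ℝ)) ^ (τ - 1) := by
  have hτ0 : (0 : ℝ) < τ := by exact_mod_cast hτ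
  have hgeom := geom_sum_mul_add (2 / (τ : ℝ)) s
  rw [add_comm (2 / (τ : ℝ))] at hgeom
  calc ∑ k ∈ Finset.range s, (1 + 2 / (τ : ℝ)) ^ k
      = τ / 2 * ((1 + 2 / (τ : ℝ)) ^ s - 1) := by
        rw [← hgeom]; field_simp; ring
    _ ≤ τ / 2 * (1 + 2 / (τ : ℝ)) ^ (τ - 1) := by
        gcongr
        exact (sub_le_self _ zero_le_one).trans
          (pow_le_pow_right₀ (le_add_of_nonneg_right (by positivity)) hs)

section Frobenius

variable {N n : ℕ}

lemma frobSq_eq_sum_norm_sq_rows (A : Matrix (Fin N) (Fin n) ℝ) :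
    frobSq A = ∑ i, ‖(WithLp.equiv 2 (Fin n → ℝ)).symm (A i)‖ ^ 2 := by
  simp_rw [EuclideanSpace.norm_sq_eq]
  simp only [frobSq, Matrix.trace, Matrix.diag, Matrix.mul_apply, Matrix.transpose_apply,
    WithLp.equiv_symm_apply, Real.norm_eq_abs, sq_abs, ← sq]
  exact Finset.sum_comm

lemma frobSq_eq_norm_sq (A : Matrix (Fin N) (Fin n) ℝ) : frobSq A = ‖A‖ ^ 2 := by
  rw [frobSq_eq_sum_norm_sq_rows, Matrix.frobenius_norm_def, ← Real.sqrt_eq_rpow,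
    Real.sq_sqrt (by positivity)]
  simp_rw [EuclideanSpace.norm_sq_eq]
  simp

lemma frobSq_gradF_sub_le {L : ℝ}
    {g : Fin N → EuclideanSpace ℝ (Fin n) → EuclideanSpace ℝ (Fin n)}
    (hg : ∀ i x y, ‖g i x - g i y‖ ≤ L * ‖x - y‖) (X Z : Matrix (Fin N) (Fin n) ℝ) :
    frobSq (gradF g X - gradF g Z) ≤ L ^ 2 * frobSq (X - Z) := by
  rw [frobSq_eq_sum_norm_sq_rows, frobSq_eq_sum_norm_sq_rows, Finset.mul_sum]
  gcongr with i
  rw [← mul_pow]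
  exact pow_le_pow_left₀ (norm_nonneg _) (hg i _ _) 2

lemma norm_gradF_sub_le {L : ℝ} (hL : 0 ≤ L)
    {g : Fin N → EuclideanSpace ℝ (Fin n) → EuclideanSpace ℝ (Fin n)}
    (hg : ∀ i x y, ‖g i x - g i y‖ ≤ L * ‖x - y‖) (X Z : Matrix (Fin N) (Fin n) ℝ) :
    ‖gradF g X - gradF g Z‖ ≤ L * ‖X - Z‖ := by
  have h := frobSq_gradF_sub_le hg X Z
  rw [frobSq_eq_norm_sq, frobSq_eq_norm_sq, ← mul_pow] at h
  exact pow_le_pow_iff_left₀ (norm_nonneg _) (by positivity) two_ne_zero |>.mp h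

end Frobenius

theorem within_round_gradient_drift_sq_bound_general
    {N n : ℕ}
    (L μ : ℝ) (hμ : 0 < μ) (hLμ : μ ≤ L)
    (g : Fin N → EuclideanSpace ℝ (Fin n) → EuclideanSpace ℝ (Fin n))
    (hsmooth : ∀ i x y, ‖g i x - g i y‖ ≤ L * ‖x - y‖)
    (Xstar : Matrix (Fin N) (Fin n) ℝ)
    (Dstar : Matrix (Fin N) (Fin n) ℝ) (hDstar : Dstar = - gradF g Xstar)
    (Dbar : Matrix (Fin N) (Fin n) ℝ)
    (τ : ℕ) (hτ : 1 ≤ τ) (α : ℝ) (hα : 0 < α)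
    (hταL : (τ : ℝ) * α * L ≤ 2)
    (Y : ℕ → Matrix (Fin N) (Fin n) ℝ)
    (hY : ∀ s : ℕ, Y (s + 1) = Y s - α • gradF g (Y s) - α • Dbar) :
    ∀ s : ℕ, s ≤ τ - 1 →
      frobSq (gradF g (Y s) - gradF g (Y 0))
      ≤ ((τ : ℝ) ^ 2 / 2) * (1 + 2 / (τ : ℝ)) ^ (2 * τ - 2) * L ^ 4 * α ^ 2
            * frobSq (Y 0 - Xstar)
        + ((τ : ℝ) ^ 2 / 2) * (1 + 2 / (τ : ℝ)) ^ (2 * τ - 2) * L ^ 2 * α ^ 2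
            * frobSq (Dbar - Dstar) := by
  intro s hs
  have hL : 0 ≤ L := hμ.le.trans hLμ
  set ρ := 1 + 2 / (τ : ℝ)
  have hρ : 1 + α * L ≤ ρ := by
    have hτ0 : (0 : ℝ) < τ := by exact_mod_cast hτ
    rw [add_le_add_iff_left, le_div_iff₀ hτ0]
    linarith
  set B := ‖Y 0 - Xstar‖
  set d := ‖Dbar - Dstar‖
  have hdrift : ‖Y s - Y 0‖ ≤ α * (τ / 2 * ρ ^ (τ - 1)) * (L * B + d) :=
    (norm_iterate_sub_initial_le_geom (norm_gradF_sub_le hL hsmooth) hα.le hDstar hY hL hρ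
      s).trans (by gcongr; exact sum_range_pow_one_add_two_div_le hτ hs)
  have hgrad : ‖gradF g (Y s) - gradF g (Y 0)‖
      ≤ L * (α * (τ / 2 * ρ ^ (τ - 1)) * (L * B + d)) :=
    (norm_gradF_sub_le hL hsmooth _ _).trans (by gcongr)
  have hexp : (ρ ^ (τ - 1)) ^ 2 = ρ ^ (2 * τ - 2) := by
    rw [← pow_mul]; congr 1; omega
  rw [frobSq_eq_norm_sq, frobSq_eq_norm_sq, frobSq_eq_norm_sq]
  calc ‖gradF g (Y s) - gradF g (Y 0)‖ ^ 2
      ≤ (L * (α * (τ / 2 * ρ ^ (τ - 1)) * (L * B + d))) ^ 2 := by gcongr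
    _ = (τ : ℝ) ^ 2 / 4 * ρ ^ (2 * τ - 2) * L ^ 2 * α ^ 2 * (L * B + d) ^ 2 := by
        rw [← hexp]; ring
    _ ≤ (τ : ℝ) ^ 2 / 4 * ρ ^ (2 * τ - 2) * L ^ 2 * α ^ 2 * (2 * ((L * B) ^ 2 + d ^ 2)) := by
        gcongr; exact add_sq_le
    _ = _ := by ring

/-- squared gradient-drift bound for the within-round iteration, with
`A₁ = (τ²/2)(1 + 2/τ)^{2τ−2}`. -/
theorem within_round_gradient_drift_sq_bound
    {N n : ℕ} (hN : 1 ≤ N) (hn : 1 ≤ n)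
    (L μ : ℝ) (hμ : 0 < μ) (hLμ : μ ≤ L)
    (f : Fin N → EuclideanSpace ℝ (Fin n) → ℝ)
    (g : Fin N → EuclideanSpace ℝ (Fin n) → EuclideanSpace ℝ (Fin n))
    (hdiff : ∀ i, Differentiable ℝ (f i))
    (hgrad : ∀ i x, HasGradientAt (f i) (g i x) x)
    (hsmooth : ∀ i x y, ‖g i x - g i y‖ ≤ L * ‖x - y‖)
    (hsc : ∀ i x y, μ * ‖x - y‖ ^ 2 ≤ (inner ℝ (g i x - g i y) (x - y) : ℝ))
    (xstar : EuclideanSpace ℝ (Fin n))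
    (hxstar : ∀ y : EuclideanSpace ℝ (Fin n),
      (N : ℝ)⁻¹ * ∑ i : Fin N, f i xstar ≤ (N : ℝ)⁻¹ * ∑ i : Fin N, f i y)
    (Xstar : Matrix (Fin N) (Fin n) ℝ)
    (hXstar : ∀ i : Fin N, Xstar i = (WithLp.equiv 2 (Fin n → ℝ)) xstar)
    (Dstar : Matrix (Fin N) (Fin n) ℝ) (hDstar : Dstar = - gradF g Xstar)
    (Dbar : Matrix (Fin N) (Fin n) ℝ)
    (τ : ℕ) (hτ : 1 ≤ τ) (α : ℝ) (hα : 0 < α)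
    (hταL : (τ : ℝ) * α * L ≤ 2)
    (Y : ℕ → Matrix (Fin N) (Fin n) ℝ)
    (hY : ∀ s : ℕ, Y (s + 1) = Y s - α • gradF g (Y s) - α • Dbar) :
    ∀ s : ℕ, s ≤ τ - 1 →
      frobSq (gradF g (Y s) - gradF g (Y 0))
      ≤ ((τ : ℝ) ^ 2 / 2) * (1 + 2 / (τ : ℝ)) ^ (2 * τ - 2) * L ^ 4 * α ^ 2
            * frobSq (Y 0 - Xstar)
        + ((τ : ℝ) ^ 2 / 2) * (1 + 2 / (τ : ℝ)) ^ (2 * τ - 2) * L ^ 2 * α ^ 2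
            * frobSq (Dbar - Dstar) :=
  within_round_gradient_drift_sq_bound_general L μ hμ hLμ g hsmooth Xstar Dstar hDstar Dbar τ hτ α
    hα hταL Y hY
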